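/- For all real numbers α, β with α ≠ −1 and β ≠ 0, the curve γ : ℝ → ℝ⁴, γ(t) = (cos(βt), sin(βt), e^{(α−1)t}, e^{−(α+3)t}), is nondegenerate: for every t ∈ ℝ the four vectors γ(t), γ′(t), γ″(t), γ‴(t) are linearly independent over ℝ. (This is the homogeneous curve of Segre type (1ᶜ11) in the classification of locally homogeneous nondegenerate curves in ℝP³.) -/

import Mathlib

/-- The homogeneous curve of Segre type (1ᶜ11):
`γ(t) = (cos βt, sin βt, e^{(α−1)t}, e^{−(α+3)t})`. -/
noncomputable def gammaCurve (α β : ℝ) : ℝ → (Fin 4 → ℝ) :=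
  fun t => ![Real.cos (β * t), Real.sin (β * t),
    Real.exp ((α - 1) * t), Real.exp (-(α + 3) * t)]

/-- First derivative of `gammaCurve`. -/
noncomputable def gammaD1 (α β : ℝ) : ℝ → (Fin 4 → ℝ) :=
  fun t => ![-(β * Real.sin (β * t)), β * Real.cos (β * t),
    (α - 1) * Real.exp ((α - 1) * t), (-(α + 3)) * Real.exp (-(α + 3) * t)]

/-- Second derivative of `gammaCurve`. -/
noncomputable def gammaD2 (α β : ℝ) : ℝ → (Fin 4 → ℝ) :=
  fun t => ![-(β ^ 2 * Real.cos (β * t)), -(β ^ 2 * Real.sin (β * t)),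
    (α - 1) ^ 2 * Real.exp ((α - 1) * t), (α + 3) ^ 2 * Real.exp (-(α + 3) * t)]

/-- Third derivative of `gammaCurve`. -/
noncomputable def gammaD3 (α β : ℝ) : ℝ → (Fin 4 → ℝ) :=
  fun t => ![β ^ 3 * Real.sin (β * t), -(β ^ 3 * Real.cos (β * t)),
    (α - 1) ^ 3 * Real.exp ((α - 1) * t), (-(α + 3) ^ 3) * Real.exp (-(α + 3) * t)]

private lemma HasDerivAt.of_eq' {f : ℝ → ℝ} {a b t : ℝ} (h : HasDerivAt f a t)
    (hab : a = b) : HasDerivAt f b t := hab ▸ h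

private lemma hasDerivAt_vec4 {f0 f1 f2 f3 : ℝ → ℝ} {a0 a1 a2 a3 t : ℝ}
    (h0 : HasDerivAt f0 a0 t) (h1 : HasDerivAt f1 a1 t)
    (h2 : HasDerivAt f2 a2 t) (h3 : HasDerivAt f3 a3 t) :
    HasDerivAt (fun t => ![f0 t, f1 t, f2 t, f3 t]) ![a0, a1, a2, a3] t := by
  rw [hasDerivAt_pi]
  intro i
  fin_cases i <;> simpa

private lemma hasDerivAt_gamma (α β : ℝ) (t : ℝ) :
    HasDerivAt (gammaCurve α β) (gammaD1 α β t) t := by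
  have hb : HasDerivAt (fun x : ℝ => β * x) β t :=
    ((hasDerivAt_id t).const_mul β).of_eq' (mul_one β)
  have ha : HasDerivAt (fun x : ℝ => (α - 1) * x) (α - 1) t :=
    ((hasDerivAt_id t).const_mul (α - 1)).of_eq' (mul_one _)
  have hc : HasDerivAt (fun x : ℝ => -(α + 3) * x) (-(α + 3)) t :=
    ((hasDerivAt_id t).const_mul (-(α + 3))).of_eq' (mul_one _)
  exact hasDerivAt_vec4 (hb.cos.of_eq' (by ring)) (hb.sin.of_eq' (by ring))
    (ha.exp.of_eq' (by ring)) (hc.exp.of_eq' (by ring))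

private lemma hasDerivAt_gammaD1 (α β : ℝ) (t : ℝ) :
    HasDerivAt (gammaD1 α β) (gammaD2 α β t) t := by
  have hb : HasDerivAt (fun x : ℝ => β * x) β t :=
    ((hasDerivAt_id t).const_mul β).of_eq' (mul_one β)
  have ha : HasDerivAt (fun x : ℝ => (α - 1) * x) (α - 1) t :=
    ((hasDerivAt_id t).const_mul (α - 1)).of_eq' (mul_one _)
  have hc : HasDerivAt (fun x : ℝ => -(α + 3) * x) (-(α + 3)) t :=
    ((hasDerivAt_id t).const_mul (-(α + 3))).of_eq' (mul_one _)
  exact hasDerivAt_vec4 ((hb.sin.const_mul β).neg.of_eq' (by ring))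
    ((hb.cos.const_mul β).of_eq' (by ring))
    ((ha.exp.const_mul (α - 1)).of_eq' (by ring))
    ((hc.exp.const_mul (-(α + 3))).of_eq' (by ring))

private lemma hasDerivAt_gammaD2 (α β : ℝ) (t : ℝ) :
    HasDerivAt (gammaD2 α β) (gammaD3 α β t) t := by
  have hb : HasDerivAt (fun x : ℝ => β * x) β t :=
    ((hasDerivAt_id t).const_mul β).of_eq' (mul_one β)
  have ha : HasDerivAt (fun x : ℝ => (α - 1) * x) (α - 1) t :=
    ((hasDerivAt_id t).const_mul (α - 1)).of_eq' (mul_one _)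
  have hc : HasDerivAt (fun x : ℝ => -(α + 3) * x) (-(α + 3)) t :=
    ((hasDerivAt_id t).const_mul (-(α + 3))).of_eq' (mul_one _)
  exact hasDerivAt_vec4 ((hb.cos.const_mul (β ^ 2)).neg.of_eq' (by ring))
    ((hb.sin.const_mul (β ^ 2)).neg.of_eq' (by ring))
    ((ha.exp.const_mul ((α - 1) ^ 2)).of_eq' (by ring))
    ((hc.exp.const_mul ((α + 3) ^ 2)).of_eq' (by ring))

private lemma det_fin_four' (A : Matrix (Fin 4) (Fin 4) ℝ) :
    A.det =
      A 0 0 * (A 1 1 * (A 2 2 * A 3 3 - A 2 3 * A 3 2) - A 1 2 * (A 2 1 * A 3 3 - A 2 3 * A 3 1)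
          + A 1 3 * (A 2 1 * A 3 2 - A 2 2 * A 3 1))
      - A 0 1 * (A 1 0 * (A 2 2 * A 3 3 - A 2 3 * A 3 2) - A 1 2 * (A 2 0 * A 3 3 - A 2 3 * A 3 0)
          + A 1 3 * (A 2 0 * A 3 2 - A 2 2 * A 3 0))
      + A 0 2 * (A 1 0 * (A 2 1 * A 3 3 - A 2 3 * A 3 1) - A 1 1 * (A 2 0 * A 3 3 - A 2 3 * A 3 0)
          + A 1 3 * (A 2 0 * A 3 1 - A 2 1 * A 3 0))
      - A 0 3 * (A 1 0 * (A 2 1 * A 3 2 - A 2 2 * A 3 1) - A 1 1 * (A 2 0 * A 3 2 - A 2 2 * A 3 0)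
          + A 1 2 * (A 2 0 * A 3 1 - A 2 1 * A 3 0)) := by
  rw [Matrix.det_succ_row_zero, Fin.sum_univ_four]
  norm_num [Matrix.det_fin_three, Matrix.submatrix_apply, Fin.succAbove, Fin.lt_def,
    show ((2 : Fin 3).succ : Fin 4) = 3 from rfl, show ((1 : Fin 3) : Fin 4).succ = 2 from rfl,
    show (((3 : Fin 4) : ℕ)) = 3 from rfl, show (Fin.castSucc 2 : Fin 4) = 2 from rfl]
  ring

/-- For all real `α ≠ −1` and `β ≠ 0`, the curve
`γ(t) = (cos βt, sin βt, e^{(α−1)t}, e^{−(α+3)t})` is nondegenerate: for every `t ∈ ℝ`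
the vectors `γ(t), γ′(t), γ″(t), γ‴(t)` are linearly independent over `ℝ`. -/
theorem segre1c11_nondegenerate (α β : ℝ) (hα : α ≠ -1) (hβ : β ≠ 0) :
    ∀ t : ℝ,
      LinearIndependent ℝ
        ![gammaCurve α β t,
          iteratedDeriv 1 (gammaCurve α β) t,
          iteratedDeriv 2 (gammaCurve α β) t,
          iteratedDeriv 3 (gammaCurve α β) t] := by
  intro t
  have hD1 : deriv (gammaCurve α β) = gammaD1 α β :=
    funext fun t => (hasDerivAt_gamma α β t).deriv
  have hD2 : deriv (gammaD1 α β) = gammaD2 α β :=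
    funext fun t => (hasDerivAt_gammaD1 α β t).deriv
  have h1 : iteratedDeriv 1 (gammaCurve α β) t = gammaD1 α β t := by
    rw [iteratedDeriv_one, hD1]
  have h2 : iteratedDeriv 2 (gammaCurve α β) t = gammaD2 α β t := by
    rw [show (2 : ℕ) = 1 + 1 from rfl, iteratedDeriv_succ, iteratedDeriv_one, hD1, hD2]
  have h3 : iteratedDeriv 3 (gammaCurve α β) t = gammaD3 α β t := by
    rw [show (3 : ℕ) = 2 + 1 from rfl, iteratedDeriv_succ]
    have : iteratedDeriv 2 (gammaCurve α β) = gammaD2 α β := by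
      funext s
      rw [show (2 : ℕ) = 1 + 1 from rfl, iteratedDeriv_succ, iteratedDeriv_one, hD1, hD2]
    rw [this]
    exact (hasDerivAt_gammaD2 α β t).deriv
  rw [h1, h2, h3]
  set A : Matrix (Fin 4) (Fin 4) ℝ :=
    Matrix.of ![gammaCurve α β t, gammaD1 α β t, gammaD2 α β t, gammaD3 α β t] with hA
  have key : LinearIndependent ℝ (fun i => A i) := by
    change LinearIndependent ℝ A.row
    rw [Matrix.linearIndependent_rows_iff_isUnit, Matrix.isUnit_iff_isUnit_det]
    rw [isUnit_iff_ne_zero]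
    have hdet : A.det =
        Real.exp ((α - 1) * t) * Real.exp (-(α + 3) * t) * β * (-2 * (α + 1)) *
          (β ^ 2 + (α - 1) ^ 2) * (β ^ 2 + (α + 3) ^ 2) := by
      rw [det_fin_four']
      simp only [hA, gammaCurve, gammaD1, gammaD2, gammaD3, Matrix.of_apply,
        Matrix.cons_val', Matrix.cons_val_zero, Matrix.cons_val_one, Matrix.head_cons,
        Matrix.cons_val_two, Matrix.tail_cons, Matrix.cons_val_three,
        Matrix.empty_val', Matrix.cons_val_fin_one, Matrix.head_fin_const]
      linear_combination (Real.exp ((α - 1) * t) * Real.exp (-(α + 3) * t) * β * (-2 * (α + 1)) *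
          (β ^ 2 + (α - 1) ^ 2) * (β ^ 2 + (α + 3) ^ 2)) * Real.sin_sq_add_cos_sq (β * t)
    rw [hdet]
    have e1 : Real.exp ((α - 1) * t) ≠ 0 := (Real.exp_pos _).ne'
    have e2 : Real.exp (-(α + 3) * t) ≠ 0 := (Real.exp_pos _).ne'
    have hα' : (-2 : ℝ) * (α + 1) ≠ 0 := by
      intro h
      apply hα
      have : α + 1 = 0 := by linarith [mul_eq_zero.1 h]
      linarith
    have hq1 : β ^ 2 + (α - 1) ^ 2 ≠ 0 := by positivity
    have hq2 : β ^ 2 + (α + 3) ^ 2 ≠ 0 := by positivity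
    exact mul_ne_zero (mul_ne_zero (mul_ne_zero (mul_ne_zero
      (mul_ne_zero e1 e2) hβ) hα') hq1) hq2
  exact key
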